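/- Let C, X₀, X₁, Y₀, Y₁, Z₀, Z₁ be random variables taking values in finite sets such that (i) H(Y₁ | (C, X₀, X₁, Y₀, Z₀, Z₁)) = H(Y₁ | (X₁, Z₁)) and (ii) H(Y₀ | (C, X₀, X₁, Z₀, Z₁)) = H(Y₀ | (C, X₀, Z₀)). Then I((X₀, X₁); (Y₀, Y₁) | (C, Z₀, Z₁)) ≤ I(X₀; Y₀ | (C, Z₀)) + I(X₁; Y₁ | Z₁). -/

import Mathlib

open scoped BigOperators Classical

noncomputable section

namespace OT

variable {Ω : Type*} [Fintype Ω]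

/-- Probability of an event under a pmf on a finite sample space. -/
def pr (μ : Ω → ℝ) (s : Set Ω) : ℝ := ∑ ω, s.indicator μ ω

/-- `q` is a probability mass function on a finite type. -/
def isDist {α : Type*} [Fintype α] (q : α → ℝ) : Prop := (∀ a, 0 ≤ q a) ∧ ∑ a, q a = 1

/-- Distribution (pmf) of a random variable. -/
def dst {α : Type*} (μ : Ω → ℝ) (X : Ω → α) : α → ℝ := fun a => pr μ {ω | X ω = a}

/-- Joint distribution of two random variables. -/
def jd {α β : Type*} (μ : Ω → ℝ) (X : Ω → α) (Y : Ω → β) : α × β → ℝ :=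
  fun q => pr μ {ω | X ω = q.1 ∧ Y ω = q.2}

/-- Conditional pmf given an event. -/
def cnd (μ : Ω → ℝ) (s : Set Ω) : Ω → ℝ := fun ω => s.indicator μ ω / pr μ s

/-- Shannon entropy (in bits) of a pmf on a finite type. -/
def entD {α : Type*} [Fintype α] (q : α → ℝ) : ℝ := ∑ a, -(q a * Real.logb 2 (q a))

/-- Shannon entropy (in bits) of a random variable. -/
def ent {α : Type*} [Fintype α] (μ : Ω → ℝ) (X : Ω → α) : ℝ := entD (dst μ X)

/-- Conditional Shannon entropy `H(X|Y)` (in bits). -/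
def condEnt {α β : Type*} [Fintype α] [Fintype β] (μ : Ω → ℝ) (X : Ω → α) (Y : Ω → β) : ℝ :=
  ent μ (fun ω => (X ω, Y ω)) - ent μ Y

/-- Mutual information `I(X;Y)` (in bits). -/
def mi {α β : Type*} [Fintype α] [Fintype β] (μ : Ω → ℝ) (X : Ω → α) (Y : Ω → β) : ℝ :=
  ent μ X + ent μ Y - ent μ (fun ω => (X ω, Y ω))

/-- Conditional mutual information `I(X;Y|Z)` (in bits). -/
def cmi {α β γ : Type*} [Fintype α] [Fintype β] [Fintype γ]
    (μ : Ω → ℝ) (X : Ω → α) (Y : Ω → β) (Z : Ω → γ) : ℝ :=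
  ent μ (fun ω => (X ω, Z ω)) + ent μ (fun ω => (Y ω, Z ω))
    - ent μ (fun ω => (X ω, Y ω, Z ω)) - ent μ Z

/-- Rényi entropy of order two (in bits). -/
def ren2 {α : Type*} [Fintype α] (μ : Ω → ℝ) (X : Ω → α) : ℝ :=
  Real.logb 2 (1 / ∑ a, (dst μ X a) ^ 2)

/-- Statistical (total variation) distance between two pmfs. -/
def sd {α : Type*} [Fintype α] (q q' : α → ℝ) : ℝ := (∑ a, |q a - q' a|) / 2

/-- Conditional min-entropy `H∞(X|Y)` of a joint pmf (in bits):
the minimum over `(a,b)` in the support of `log₂ (P(Y=b) / P(X=a, Y=b))`. -/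
def minEnt {α β : Type*} [Fintype α] [Fintype β] (q : α × β → ℝ) : ℝ :=
  sInf {r | ∃ a b, 0 < q (a, b) ∧ r = Real.logb 2 ((∑ a', q (a', b)) / q (a, b))}

/-- `ε`-smooth conditional min-entropy of a joint pmf (in bits). -/
def sminEnt {α β : Type*} [Fintype α] [Fintype β] (q : α × β → ℝ) (ε : ℝ) : ℝ :=
  sSup {r | ∃ q' : α × β → ℝ, isDist q' ∧ sd q q' ≤ ε ∧ r = minEnt q'}

/-- Conditional zero-entropy `H₀(X|Y)` of a joint pmf (in bits). -/
def zeroEnt {α β : Type*} [Fintype α] [Fintype β] (q : α × β → ℝ) : ℝ :=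
  sSup {r | ∃ b, 0 < ∑ a, q (a, b) ∧
    r = Real.logb 2 ((Finset.univ.filter fun a => 0 < q (a, b)).card)}

end OT

open OT

/-! Write `W = (C, Z₀)`. By the chain rule the left-hand side is
`H(Y₀ Y₁ | W Z₁) - H(Y₀ | X₀ X₁ W Z₁) - H(Y₁ | Y₀ X₀ X₁ W Z₁)`. Hypotheses (ii) and (i) turn the
two subtracted terms into `H(Y₀ | X₀ W)` and `H(Y₁ | X₁ Z₁)`, while the chain rule and the fact
that conditioning reduces entropy bound the first term by `H(Y₀ | W) + H(Y₁ | Z₁)`. That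
conditioning reduces entropy is the nonnegativity of conditional mutual information, which
follows from `log t ≤ t - 1`. -/

lemma Real.log_add_log_sub_log_sub_log_le {p q a b : ℝ} (hp : 0 < p) (hq : 0 < q) (ha : 0 < a)
    (hb : 0 < b) : Real.log a + Real.log b - Real.log p - Real.log q ≤ a * b / (p * q) - 1 := by
  have := Real.log_le_sub_one_of_pos (show 0 < a * b / (p * q) by positivity)
  rwa [Real.log_div (by positivity) (by positivity), Real.log_mul ha.ne' hb.ne',
    Real.log_mul hp.ne' hq.ne', ← sub_sub] at this

namespace OT

variable {Ω α β γ : Type*} [Fintype Ω]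

lemma dst_apply (μ : Ω → ℝ) (X : Ω → α) (a : α) :
    dst μ X a = ∑ ω, if X ω = a then μ ω else 0 := by
  simp only [dst, pr, Set.indicator_apply, Set.mem_ofPred_eq]

lemma dst_nonneg {μ : Ω → ℝ} (hμ : ∀ ω, 0 ≤ μ ω) (X : Ω → α) (a : α) : 0 ≤ dst μ X a := by
  rw [dst_apply]
  exact Finset.sum_nonneg fun ω _ => by split_ifs <;> simp [hμ ω]

lemma le_dst_self {μ : Ω → ℝ} (hμ : ∀ ω, 0 ≤ μ ω) (X : Ω → α) (ω : Ω) :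
    μ ω ≤ dst μ X (X ω) := by
  rw [dst_apply]
  refine le_of_eq_of_le (if_pos rfl).symm
    (Finset.single_le_sum (f := fun ω' => if X ω' = X ω then μ ω' else 0) ?_ (Finset.mem_univ ω))
  intro ω' _
  split_ifs <;> simp [hμ ω']

lemma sum_dst_mul [Fintype α] (μ : Ω → ℝ) (X : Ω → α) (f : α → ℝ) :
    ∑ a, dst μ X a * f a = ∑ ω, μ ω * f (X ω) := by
  simp only [dst_apply, Finset.sum_mul, ite_mul, zero_mul]
  rw [Finset.sum_comm]
  simp

lemma sum_dst [Fintype α] (μ : Ω → ℝ) (X : Ω → α) : ∑ a, dst μ X a = ∑ ω, μ ω := by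
  simpa using sum_dst_mul μ X 1

lemma sum_dst_pair_left [Fintype α] (μ : Ω → ℝ) (X : Ω → α) (Y : Ω → β) (b : β) :
    ∑ a, dst μ (fun ω => (X ω, Y ω)) (a, b) = dst μ Y b := by
  simp only [dst_apply, Prod.mk.injEq]
  rw [Finset.sum_comm]
  simp [ite_and]

lemma ent_eq_sum_surprisal [Fintype α] (μ : Ω → ℝ) (X : Ω → α) :
    ent μ X = ∑ ω, μ ω * -Real.logb 2 (dst μ X (X ω)) := by
  rw [← sum_dst_mul μ X fun a => -Real.logb 2 (dst μ X a), ent, entD]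
  simp only [mul_neg]

lemma ent_congr [Fintype α] [Fintype β] {μ : Ω → ℝ} {X : Ω → α} {Y : Ω → β}
    (h : ∀ ω ω', X ω' = X ω ↔ Y ω' = Y ω) : ent μ X = ent μ Y := by
  simp only [ent_eq_sum_surprisal, dst_apply, h]

lemma condEnt_congr_right [Fintype α] [Fintype β] [Fintype γ] {μ : Ω → ℝ} (X : Ω → α)
    {Y : Ω → β} {Y' : Ω → γ} (h : ∀ ω ω', Y ω' = Y ω ↔ Y' ω' = Y' ω) :
    condEnt μ X Y = condEnt μ X Y' := by
  have hpair (ω ω' : Ω) : (X ω', Y ω') = (X ω, Y ω) ↔ (X ω', Y' ω') = (X ω, Y' ω) := by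
    simp only [Prod.mk.injEq, h]
  rw [condEnt, condEnt, ent_congr h, ent_congr hpair]

lemma sum_dst_pair_mul_div_le [Fintype α] [Fintype β] [Fintype γ] {μ : Ω → ℝ}
    (hμ : ∀ ω, 0 ≤ μ ω) (X : Ω → α) (Y : Ω → β) (Z : Ω → γ) :
    ∑ ω, μ ω * (dst μ (fun ω => (X ω, Z ω)) (X ω, Z ω) * dst μ (fun ω => (Y ω, Z ω)) (Y ω, Z ω)
      / (dst μ (fun ω => (X ω, Y ω, Z ω)) (X ω, Y ω, Z ω) * dst μ Z (Z ω))) ≤ ∑ ω, μ ω := by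
  set pXZ := dst μ (fun ω => (X ω, Z ω))
  set pYZ := dst μ (fun ω => (Y ω, Z ω))
  set pXYZ := dst μ (fun ω => (X ω, Y ω, Z ω))
  set pZ := dst μ Z
  have hterm (t : α × β × γ) :
      pXYZ t * (pXZ (t.1, t.2.2) * pYZ (t.2.1, t.2.2) / (pXYZ t * pZ t.2.2))
        ≤ pXZ (t.1, t.2.2) * pYZ (t.2.1, t.2.2) / pZ t.2.2 := by
    have hp : 0 ≤ pXYZ t := dst_nonneg hμ _ t
    rcases hp.eq_or_lt with h | h
    · rw [← h, zero_mul]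
      exact div_nonneg (mul_nonneg (dst_nonneg hμ _ _) (dst_nonneg hμ _ _)) (dst_nonneg hμ _ _)
    · rw [← mul_div_assoc, mul_div_mul_left _ _ h.ne']
  calc _ = ∑ t, pXYZ t * (pXZ (t.1, t.2.2) * pYZ (t.2.1, t.2.2) / (pXYZ t * pZ t.2.2)) :=
        (sum_dst_mul μ _ fun t => _).symm
    _ ≤ ∑ t : α × β × γ, pXZ (t.1, t.2.2) * pYZ (t.2.1, t.2.2) / pZ t.2.2 :=
        Finset.sum_le_sum fun t _ => hterm t
    _ = ∑ c, (∑ a, pXZ (a, c)) * (∑ b, pYZ (b, c)) / pZ c := by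
        simp only [Fintype.sum_prod_type, Finset.sum_mul_sum, Finset.sum_div]
        exact (Finset.sum_congr rfl fun _ _ => Finset.sum_comm).trans Finset.sum_comm
    _ = ∑ ω, μ ω := by
        simp only [pXZ, pYZ, sum_dst_pair_left, mul_self_div_self, pZ, sum_dst]

lemma cmi_nonneg [Fintype α] [Fintype β] [Fintype γ] {μ : Ω → ℝ} (hμ : ∀ ω, 0 ≤ μ ω)
    (X : Ω → α) (Y : Ω → β) (Z : Ω → γ) : 0 ≤ cmi μ X Y Z := by
  set pXZ := dst μ (fun ω => (X ω, Z ω))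
  set pYZ := dst μ (fun ω => (Y ω, Z ω))
  set pXYZ := dst μ (fun ω => (X ω, Y ω, Z ω))
  set pZ := dst μ Z
  set L : Ω → ℝ := fun ω => Real.log (pXZ (X ω, Z ω)) + Real.log (pYZ (Y ω, Z ω))
    - Real.log (pXYZ (X ω, Y ω, Z ω)) - Real.log (pZ (Z ω))
  have hcmi : cmi μ X Y Z = -(∑ ω, μ ω * L ω) / Real.log 2 := by
    simp only [cmi, ent_eq_sum_surprisal, ← Finset.sum_add_distrib, ← Finset.sum_sub_distrib,
      ← Finset.sum_neg_distrib, Finset.sum_div]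
    refine Finset.sum_congr rfl fun ω _ => ?_
    simp only [L, Real.logb]
    ring
  -- all four probabilities at `ω` are at least `μ ω`, hence positive where `μ ω` is
  have hL (ω : Ω) : μ ω * L ω ≤ μ ω * (pXZ (X ω, Z ω) * pYZ (Y ω, Z ω)
      / (pXYZ (X ω, Y ω, Z ω) * pZ (Z ω))) - μ ω := by
    rcases (hμ ω).eq_or_lt with h | h
    · simp [← h]
    rw [← mul_sub_one]
    refine mul_le_mul_of_nonneg_left (Real.log_add_log_sub_log_sub_log_le ?_ ?_ ?_ ?_) h.le <;>
      exact h.trans_le (le_dst_self hμ _ ω)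
  have hsum : ∑ ω, μ ω * L ω ≤ 0 := by
    have hratio := sum_dst_pair_mul_div_le hμ X Y Z
    have hL_sum := Finset.sum_le_sum fun ω (_ : ω ∈ Finset.univ) => hL ω
    rw [Finset.sum_sub_distrib] at hL_sum
    linarith
  rw [hcmi]
  exact div_nonneg (neg_nonneg.mpr hsum) (Real.log_nonneg one_le_two)

variable [Fintype α] [Fintype β] [Fintype γ]

lemma cmi_eq_condEnt_sub_condEnt (μ : Ω → ℝ) (X : Ω → α) (Y : Ω → β) (Z : Ω → γ) :
    cmi μ X Y Z = condEnt μ Y Z - condEnt μ Y (fun ω => (X ω, Z ω)) := by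
  have hperm : ent μ (fun ω => (X ω, Y ω, Z ω)) = ent μ (fun ω => (Y ω, X ω, Z ω)) :=
    ent_congr fun ω ω' => by simp only [Prod.mk.injEq]; tauto
  rw [cmi, condEnt, condEnt, hperm]
  ring

lemma condEnt_pair_le {μ : Ω → ℝ} (hμ : ∀ ω, 0 ≤ μ ω) (X : Ω → α) (Y : Ω → β) (Z : Ω → γ) :
    condEnt μ Y (fun ω => (X ω, Z ω)) ≤ condEnt μ Y Z := by
  linarith [cmi_nonneg hμ X Y Z, cmi_eq_condEnt_sub_condEnt μ X Y Z]

lemma condEnt_pair_left (μ : Ω → ℝ) (X : Ω → α) (X' : Ω → β) (Y : Ω → γ) :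
    condEnt μ (fun ω => (X ω, X' ω)) Y
      = condEnt μ X Y + condEnt μ X' (fun ω => (X ω, Y ω)) := by
  have hperm : ent μ (fun ω => ((X ω, X' ω), Y ω)) = ent μ (fun ω => (X' ω, X ω, Y ω)) :=
    ent_congr fun ω ω' => by simp only [Prod.mk.injEq]; tauto
  rw [condEnt, condEnt, condEnt, hperm]
  ring

end OT

/-- if (i) `H(Y₁|(C,X₀,X₁,Y₀,Z₀,Z₁)) = H(Y₁|(X₁,Z₁))` and
(ii) `H(Y₀|(C,X₀,X₁,Z₀,Z₁)) = H(Y₀|(C,X₀,Z₀))`, then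
`I((X₀,X₁);(Y₀,Y₁)|(C,Z₀,Z₁)) ≤ I(X₀;Y₀|(C,Z₀)) + I(X₁;Y₁|Z₁)`. -/
theorem statement11 {Ω A X0t X1t Y0t Y1t Z0t Z1t : Type*} [Fintype Ω] [Fintype A]
    [Fintype X0t] [Fintype X1t] [Fintype Y0t] [Fintype Y1t] [Fintype Z0t] [Fintype Z1t]
    (μ : Ω → ℝ) (hμ : isDist μ)
    (C : Ω → A) (X₀ : Ω → X0t) (X₁ : Ω → X1t) (Y₀ : Ω → Y0t) (Y₁ : Ω → Y1t)
    (Z₀ : Ω → Z0t) (Z₁ : Ω → Z1t)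
    (h1 : condEnt μ Y₁ (fun ω => (C ω, X₀ ω, X₁ ω, Y₀ ω, Z₀ ω, Z₁ ω))
        = condEnt μ Y₁ (fun ω => (X₁ ω, Z₁ ω)))
    (h2 : condEnt μ Y₀ (fun ω => (C ω, X₀ ω, X₁ ω, Z₀ ω, Z₁ ω))
        = condEnt μ Y₀ (fun ω => (C ω, X₀ ω, Z₀ ω))) :
    cmi μ (fun ω => (X₀ ω, X₁ ω)) (fun ω => (Y₀ ω, Y₁ ω)) (fun ω => (C ω, Z₀ ω, Z₁ ω))
      ≤ cmi μ X₀ Y₀ (fun ω => (C ω, Z₀ ω)) + cmi μ X₁ Y₁ Z₁ := by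
  simp only [cmi_eq_condEnt_sub_condEnt, condEnt_pair_left]
  have hY₀ : condEnt μ Y₀ (fun ω => ((X₀ ω, X₁ ω), C ω, Z₀ ω, Z₁ ω))
      = condEnt μ Y₀ (fun ω => (X₀ ω, C ω, Z₀ ω)) :=
    (condEnt_congr_right Y₀ fun _ _ => by simp only [Prod.mk.injEq]; tauto).trans <|
      h2.trans (condEnt_congr_right Y₀ fun _ _ => by simp only [Prod.mk.injEq]; tauto)
  have hY₁ : condEnt μ Y₁ (fun ω => (Y₀ ω, (X₀ ω, X₁ ω), C ω, Z₀ ω, Z₁ ω))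
      = condEnt μ Y₁ (fun ω => (X₁ ω, Z₁ ω)) :=
    (condEnt_congr_right Y₁ fun _ _ => by simp only [Prod.mk.injEq]; tauto).trans h1
  have hY₀_le : condEnt μ Y₀ (fun ω => (C ω, Z₀ ω, Z₁ ω))
      ≤ condEnt μ Y₀ (fun ω => (C ω, Z₀ ω)) :=
    (condEnt_congr_right Y₀ fun _ _ => by simp only [Prod.mk.injEq]; tauto).trans_le
      (condEnt_pair_le hμ.1 Z₁ Y₀ _)
  have hY₁_le : condEnt μ Y₁ (fun ω => (Y₀ ω, C ω, Z₀ ω, Z₁ ω)) ≤ condEnt μ Y₁ Z₁ :=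
    (condEnt_congr_right Y₁ fun _ _ => by simp only [Prod.mk.injEq]; tauto).trans_le
      (condEnt_pair_le hμ.1 (fun ω => (Y₀ ω, C ω, Z₀ ω)) Y₁ Z₁)
  linarith
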